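/- arXiv:2109.09038 — 4 statements merged into one kernel-verified Lean document; each statement's English description precedes it below -/
import Mathlib

section
/- The function Q*(s,a) = T(s,a) − α·π(s,a)/πβ(s,a) is the unique global minimizer of F; that is, F(Q*) ≤ F(Q) for every Q : S × A → ℝ, with equality only if Q = Q*. -/
/-- The function `Q*(s,a) = T(s,a) − α·π(s,a)/πβ(s,a)` is the unique global
minimizer of the shared-experience Q-learning objective `F`. -/
theorem stmt_0
    {S A : Type*} [Fintype S] [Fintype A] [Nonempty S] [Nonempty A]
    (μ : S → ℝ) (hμpos : ∀ s, 0 < μ s) (hμsum : ∑ s, μ s = 1)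
    (πβ πl : S → A → ℝ)
    (hπβpos : ∀ s a, 0 < πβ s a) (hπlpos : ∀ s a, 0 < πl s a)
    (hπβsum : ∀ s, ∑ a, πβ s a = 1) (hπlsum : ∀ s, ∑ a, πl s a = 1)
    (T : S × A → ℝ) (α : ℝ) (hα : 0 < α)
    (F : (S × A → ℝ) → ℝ)
    (hF : ∀ Q : S × A → ℝ, F Q =
      α * ∑ s, μ s * ∑ a, πl s a * Q (s, a)
      + (1 / 2) * ∑ s, ∑ a, μ s * πβ s a * (Q (s, a) - T (s, a)) ^ 2)
    (Qstar : S × A → ℝ)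
    (hQstar : ∀ p : S × A, Qstar p = T p - α * πl p.1 p.2 / πβ p.1 p.2) :
    ∀ Q : S × A → ℝ, F Qstar ≤ F Q ∧ (F Qstar = F Q → Q = Qstar) := by
  intro Q
  have hrw : ∀ R : S × A → ℝ, F R =
      ∑ s, ∑ a, (α * (μ s * (πl s a * R (s, a)))
        + (1 / 2) * (μ s * πβ s a * (R (s, a) - T (s, a)) ^ 2)) := by
    intro R
    rw [hF]
    rw [Finset.mul_sum, Finset.mul_sum, ← Finset.sum_add_distrib]
    refine Finset.sum_congr rfl fun s _ => ?_
    rw [Finset.mul_sum, Finset.mul_sum, Finset.mul_sum, ← Finset.sum_add_distrib]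
  have key : F Q - F Qstar =
      ∑ s, ∑ a, (1 / 2) * (μ s * πβ s a * (Q (s, a) - Qstar (s, a)) ^ 2) := by
    rw [hrw Q, hrw Qstar, ← Finset.sum_sub_distrib]
    refine Finset.sum_congr rfl fun s _ => ?_
    rw [← Finset.sum_sub_distrib]
    refine Finset.sum_congr rfl fun a _ => ?_
    have hb : πβ s a ≠ 0 := (hπβpos s a).ne'
    rw [hQstar (s, a)]
    field_simp
    ring
  have hterm : ∀ s ∈ (Finset.univ : Finset S), ∀ a ∈ (Finset.univ : Finset A),
      0 ≤ (1 / 2) * (μ s * πβ s a * (Q (s, a) - Qstar (s, a)) ^ 2) := by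
    intro s _ a _
    have h1 := (hμpos s).le
    have h2 := (hπβpos s a).le
    have h3 := sq_nonneg (Q (s, a) - Qstar (s, a))
    positivity
  have hnn : 0 ≤ F Q - F Qstar := by
    rw [key]
    exact Finset.sum_nonneg fun s _ => Finset.sum_nonneg fun a _ => hterm s (by simp) a (by simp)
  constructor
  · linarith
  · intro heq
    have hzero : ∑ s, ∑ a, (1 / 2) * (μ s * πβ s a * (Q (s, a) - Qstar (s, a)) ^ 2) = 0 := by
      rw [← key]; linarith
    have hall : ∀ s ∈ (Finset.univ : Finset S), ∀ a ∈ (Finset.univ : Finset A),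
        (1 / 2) * (μ s * πβ s a * (Q (s, a) - Qstar (s, a)) ^ 2) = 0 := by
      have h1 := (Finset.sum_eq_zero_iff_of_nonneg
        (fun s _ => Finset.sum_nonneg fun a _ => hterm s (by simp) a (by simp))).mp hzero
      intro s hs a ha
      exact (Finset.sum_eq_zero_iff_of_nonneg (fun a ha => hterm s hs a ha)).mp (h1 s hs) a ha
    funext p
    obtain ⟨s, a⟩ := p
    have h := hall s (by simp) a (by simp)
    have hprod : μ s * πβ s a * (Q (s, a) - Qstar (s, a)) ^ 2 = 0 := by linarith
    have hpos : 0 < μ s * πβ s a := mul_pos (hμpos s) (hπβpos s a)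
    have hx : (Q (s, a) - Qstar (s, a)) ^ 2 = 0 := by
      rcases mul_eq_zero.mp hprod with h' | h'
      · exact absurd h' hpos.ne'
      · exact h'
    have := pow_eq_zero_iff (n := 2) (by norm_num) |>.mp hx
    linarith
end

section
/- Every global minimizer Q of F satisfies Q(s,a) = T(s,a) − α·π(s,a)/πβ(s,a) for all (s,a) ∈ S × A. -/
/-- Every global minimizer `Q` of the shared-experience objective `F` satisfies
`Q(s,a) = T(s,a) − α·π(s,a)/πβ(s,a)` for all `(s,a)`. -/
theorem stmt_1
    {S A : Type*} [Fintype S] [Fintype A] [Nonempty S] [Nonempty A]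
    (μ : S → ℝ) (hμpos : ∀ s, 0 < μ s) (hμsum : ∑ s, μ s = 1)
    (πβ πl : S → A → ℝ)
    (hπβpos : ∀ s a, 0 < πβ s a) (hπlpos : ∀ s a, 0 < πl s a)
    (hπβsum : ∀ s, ∑ a, πβ s a = 1) (hπlsum : ∀ s, ∑ a, πl s a = 1)
    (T : S × A → ℝ) (α : ℝ) (hα : 0 < α)
    (F : (S × A → ℝ) → ℝ)
    (hF : ∀ Q : S × A → ℝ, F Q =
      α * ∑ s, μ s * ∑ a, πl s a * Q (s, a)
      + (1 / 2) * ∑ s, ∑ a, μ s * πβ s a * (Q (s, a) - T (s, a)) ^ 2) :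
    ∀ Q : S × A → ℝ, (∀ Q' : S × A → ℝ, F Q ≤ F Q') →
      ∀ (s : S) (a : A), Q (s, a) = T (s, a) - α * πl s a / πβ s a := by
  intro Q hQ s₀ a₀
  set Q' : S × A → ℝ := fun p => T p - α * πl p.1 p.2 / πβ p.1 p.2 with hQ'def
  -- F Q - F Q' = (1/2) ∑∑ μ πβ (Q - Q')²
  have hFG : ∀ R : S × A → ℝ, F R = ∑ s, ∑ a,
      (α * (μ s * (πl s a * R (s, a)))
        + 1 / 2 * (μ s * πβ s a * (R (s, a) - T (s, a)) ^ 2)) := by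
    intro R
    rw [hF R]
    simp only [Finset.mul_sum, ← Finset.sum_add_distrib]
  have key : F Q - F Q' =
      (1/2) * ∑ s, ∑ a, μ s * πβ s a * (Q (s, a) - Q' (s, a)) ^ 2 := by
    rw [hFG Q, hFG Q']
    simp only [Finset.mul_sum, ← Finset.sum_sub_distrib]
    refine Finset.sum_congr rfl fun s _ => Finset.sum_congr rfl fun a _ => ?_
    have hb := (hπβpos s a).ne'
    simp only [hQ'def]
    field_simp
    ring
  have hle : F Q - F Q' ≤ 0 := sub_nonpos.mpr (hQ Q')
  rw [key] at hle
  have hzero : ∀ s ∈ (Finset.univ : Finset S), ∀ a ∈ (Finset.univ : Finset A),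
      μ s * πβ s a * (Q (s, a) - Q' (s, a)) ^ 2 = 0 := by
    have hnn : ∀ s ∈ (Finset.univ : Finset S),
        0 ≤ ∑ a, μ s * πβ s a * (Q (s, a) - Q' (s, a)) ^ 2 := by
      intro s _
      exact Finset.sum_nonneg fun a _ => mul_nonneg (mul_nonneg (hμpos s).le (hπβpos s a).le) (sq_nonneg _)
    have hsum0 : ∑ s, ∑ a, μ s * πβ s a * (Q (s, a) - Q' (s, a)) ^ 2 = 0 := by
      nlinarith [Finset.sum_nonneg hnn]
    intro s hs a ha
    have h1 := (Finset.sum_eq_zero_iff_of_nonneg hnn).mp hsum0 s hs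
    have h2 : ∀ a ∈ (Finset.univ : Finset A),
        0 ≤ μ s * πβ s a * (Q (s, a) - Q' (s, a)) ^ 2 := fun a _ =>
        mul_nonneg (mul_nonneg (hμpos s).le (hπβpos s a).le) (sq_nonneg _)
    exact (Finset.sum_eq_zero_iff_of_nonneg h2).mp h1 a ha
  have h := hzero s₀ (Finset.mem_univ _) a₀ (Finset.mem_univ _)
  have hpos : 0 < μ s₀ * πβ s₀ a₀ := mul_pos (hμpos s₀) (hπβpos s₀ a₀)
  have : (Q (s₀, a₀) - Q' (s₀, a₀)) ^ 2 = 0 := by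
    rcases mul_eq_zero.mp h with h' | h'
    · exact absurd h' hpos.ne'
    · exact h'
  have := pow_eq_zero_iff (n := 2) (by norm_num) |>.mp this
  have := sub_eq_zero.mp this
  simpa [hQ'def] using this
end

section
/- The unique global minimizer Q* of F strictly underestimates the target at every state-action pair: Q*(s,a) < T(s,a) for all (s,a) ∈ S × A. In particular, when T is the Bellman backup B*Q̂ᵏ of the previous Q-iterate, each new iterate obtained by minimizing F satisfies Q̂ᵏ⁺¹(s,a) < (B*Q̂ᵏ)(s,a) at every (s,a). -/
/-- Any global minimizer of `F` strictly underestimates the target `T`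
at every state-action pair. -/
theorem stmt_4
    {S A : Type*} [Fintype S] [Fintype A] [Nonempty S] [Nonempty A]
    (μ : S → ℝ) (hμpos : ∀ s, 0 < μ s) (hμsum : ∑ s, μ s = 1)
    (πβ πl : S → A → ℝ)
    (hπβpos : ∀ s a, 0 < πβ s a) (hπlpos : ∀ s a, 0 < πl s a)
    (hπβsum : ∀ s, ∑ a, πβ s a = 1) (hπlsum : ∀ s, ∑ a, πl s a = 1)
    (T : S × A → ℝ) (α : ℝ) (hα : 0 < α)
    (F : (S × A → ℝ) → ℝ)
    (hF : ∀ Q : S × A → ℝ, F Q =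
      α * ∑ s, μ s * ∑ a, πl s a * Q (s, a)
      + (1 / 2) * ∑ s, ∑ a, μ s * πβ s a * (Q (s, a) - T (s, a)) ^ 2) :
    ∀ Qstar : S × A → ℝ, (∀ Q : S × A → ℝ, F Qstar ≤ F Q) →
      ∀ (s : S) (a : A), Qstar (s, a) < T (s, a) := by
  classical
  intro Qstar hmin s a
  set x : ℝ := Qstar (s, a) with hx
  set d : ℝ := x - T (s, a) with hd
  -- perturbed function
  have key : ∀ t : ℝ,
      F (fun p => if p = (s, a) then Qstar p + t else Qstar p)
      = F Qstar + α * (μ s * (πl s a * t))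
        + (1 / 2) * (μ s * πβ s a * ((d + t) ^ 2 - d ^ 2)) := by
    intro t
    set Qt : S × A → ℝ := fun p => if p = (s, a) then Qstar p + t else Qstar p with hQt
    rw [hF Qt, hF Qstar]
    have hlin : ∀ s' : S, ∑ a', πl s' a' * Qt (s', a')
        = (∑ a', πl s' a' * Qstar (s', a')) + (if s' = s then πl s a * t else 0) := by
      intro s'
      by_cases hs : s' = s
      · subst hs
        simp only [if_pos rfl]
        have : ∀ a' : A, πl s' a' * Qt (s', a')
            = πl s' a' * Qstar (s', a') + (if a' = a then πl s' a * t else 0) := by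
          intro a'
          by_cases ha : a' = a
          · subst ha; simp [hQt]; ring
          · simp [hQt, Prod.ext_iff, ha]
        rw [Finset.sum_congr rfl (fun a' _ => this a'), Finset.sum_add_distrib,
          Finset.sum_ite_eq' Finset.univ a (fun _ => πl s' a * t)]
        simp
      · simp only [if_neg hs, add_zero]
        apply Finset.sum_congr rfl
        intro a' _
        have : Qt (s', a') = Qstar (s', a') := by
          simp [hQt, Prod.ext_iff, hs]
        rw [this]
    have hquad : ∀ s' : S, ∑ a', μ s' * πβ s' a' * (Qt (s', a') - T (s', a')) ^ 2
        = (∑ a', μ s' * πβ s' a' * (Qstar (s', a') - T (s', a')) ^ 2)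
          + (if s' = s then μ s * πβ s a * ((d + t) ^ 2 - d ^ 2) else 0) := by
      intro s'
      by_cases hs : s' = s
      · subst hs
        simp only [if_pos rfl]
        have : ∀ a' : A, μ s' * πβ s' a' * (Qt (s', a') - T (s', a')) ^ 2
            = μ s' * πβ s' a' * (Qstar (s', a') - T (s', a')) ^ 2
              + (if a' = a then μ s' * πβ s' a * ((d + t) ^ 2 - d ^ 2) else 0) := by
          intro a'
          by_cases ha : a' = a
          · subst ha
            simp only [hQt, if_pos rfl, eq_self_iff_true, if_true]
            rw [hd, hx]
            ring
          · simp [hQt, Prod.ext_iff, ha]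
        rw [Finset.sum_congr rfl (fun a' _ => this a'), Finset.sum_add_distrib,
          Finset.sum_ite_eq' Finset.univ a (fun _ => μ s' * πβ s' a * ((d + t) ^ 2 - d ^ 2))]
        simp
      · simp only [if_neg hs, add_zero]
        apply Finset.sum_congr rfl
        intro a' _
        have : Qt (s', a') = Qstar (s', a') := by
          simp [hQt, Prod.ext_iff, hs]
        rw [this]
    have e1 : ∑ s', μ s' * ∑ a', πl s' a' * Qt (s', a')
        = ∑ s', μ s' * ((∑ a', πl s' a' * Qstar (s', a'))
            + (if s' = s then πl s a * t else 0)) :=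
      Finset.sum_congr rfl (fun s' _ => by rw [hlin s'])
    have e2 : ∑ s', ∑ a', μ s' * πβ s' a' * (Qt (s', a') - T (s', a')) ^ 2
        = ∑ s', ((∑ a', μ s' * πβ s' a' * (Qstar (s', a') - T (s', a')) ^ 2)
            + (if s' = s then μ s * πβ s a * ((d + t) ^ 2 - d ^ 2) else 0)) :=
      Finset.sum_congr rfl (fun s' _ => hquad s')
    rw [e1, e2]
    simp only [mul_add, Finset.sum_add_distrib, mul_ite, mul_zero]
    rw [Finset.sum_ite_eq' Finset.univ s (fun x => μ x * (πl s a * t)),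
      Finset.sum_ite_eq' Finset.univ s (fun _ => μ s * πβ s a * ((d + t) ^ 2 - d ^ 2))]
    simp only [Finset.mem_univ, if_pos]
    ring
  -- the inequality for all t
  set c : ℝ := α * (μ s * πl s a) with hc
  set b : ℝ := μ s * πβ s a with hb
  have hcpos : 0 < c := by
    have h1 := hμpos s; have h2 := hπlpos s a
    rw [hc]; exact mul_pos hα (mul_pos h1 h2)
  have hbpos : 0 < b := by
    have h1 := hμpos s; have h2 := hπβpos s a
    rw [hb]; exact mul_pos h1 h2
  have hineq : ∀ t : ℝ, 0 ≤ c * t + (b / 2) * (t ^ 2 + 2 * d * t) := by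
    intro t
    have h := hmin (fun p => if p = (s, a) then Qstar p + t else Qstar p)
    rw [key t] at h
    rw [hc, hb]
    nlinarith [h]
  by_contra hcon
  push_neg at hcon
  have hd0 : 0 ≤ d := by simp [hd, hx]; linarith
  have hbne : b ≠ 0 := ne_of_gt hbpos
  obtain ⟨t, hbt⟩ : ∃ t : ℝ, b * t = -(c + b * d) :=
    ⟨-(c + b * d) / b, by field_simp⟩
  have hcbd : 0 < c + b * d := by nlinarith
  have h := hineq t
  have h2 : 0 ≤ 2 * (b * t) * c + (b * t) ^ 2 + 2 * d * b * (b * t) := by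
    have hr : 2 * (b * t) * c + (b * t) ^ 2 + 2 * d * b * (b * t)
        = (2 * b) * (c * t + b / 2 * (t ^ 2 + 2 * d * t)) := by ring
    rw [hr]
    exact mul_nonneg (by linarith) h
  rw [hbt] at h2
  nlinarith [h2, mul_pos hcbd hcbd]
end

section
/- Let Q̂ be the unique fixed point of the Bellman optimality operator B and, for a penalty c : S × A → ℝ with c(s,a) ≥ 0 for all (s,a), let Q̂c be the unique fixed point of the penalized operator Bc Q = B Q − c. Then Q̂c(s,a) ≤ Q̂(s,a) − c(s,a) for all (s,a) ∈ S × A; in particular, if c(s,a) > 0 for all (s,a) (as when c(s,a) = α·π(s,a)/πβ(s,a) with α > 0 and policies π, πβ everywhere positive), the Q-function produced in the limit of the penalized iteration strictly lower bounds Q̂ at every state-action pair. -/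
/-- If `Q̂` is the fixed point of `B` and `Q̂c` the fixed point of the
penalized operator `Bc Q = B Q − c` with `c ≥ 0`, then `Q̂c ≤ Q̂ − c` pointwise; in
particular, if `c > 0` everywhere then `Q̂c` strictly lower bounds `Q̂` everywhere. -/
theorem stmt_8
    {S A : Type*} [Fintype S] [Fintype A] [Nonempty S] [Nonempty A]
    (r : S × A → ℝ) (P : S → A → S → ℝ)
    (hP0 : ∀ s a s', 0 ≤ P s a s') (hP1 : ∀ s a, ∑ s', P s a s' = 1)
    (γ : ℝ) (hγ0 : 0 ≤ γ) (hγ1 : γ < 1)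
    (B : (S × A → ℝ) → (S × A → ℝ))
    (hB : ∀ (Q : S × A → ℝ) (s : S) (a : A), B Q (s, a) =
      r (s, a) + γ * ∑ s', P s a s' *
        Finset.univ.sup' Finset.univ_nonempty (fun a' : A => Q (s', a')))
    (c : S × A → ℝ) (hc : ∀ p : S × A, 0 ≤ c p)
    (Bc : (S × A → ℝ) → (S × A → ℝ))
    (hBc : ∀ (Q : S × A → ℝ) (p : S × A), Bc Q p = B Q p - c p)
    (Qhat : S × A → ℝ) (hQhat : B Qhat = Qhat)
    (Qc : S × A → ℝ) (hQc : Bc Qc = Qc) :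
    (∀ p : S × A, Qc p ≤ Qhat p - c p) ∧
      ((∀ p : S × A, 0 < c p) → ∀ p : S × A, Qc p < Qhat p) := by
  have hne : (Finset.univ : Finset (S × A)).Nonempty := Finset.univ_nonempty
  have hneA : (Finset.univ : Finset A).Nonempty := Finset.univ_nonempty
  set M := Finset.univ.sup' hne (fun p => Qc p - Qhat p) with hMdef
  have hMmem : ∀ p : S × A, Qc p - Qhat p ≤ M := fun p =>
    Finset.le_sup' (fun p => Qc p - Qhat p) (Finset.mem_univ p)
  -- key pointwise bound
  have key : ∀ p : S × A, Qc p ≤ Qhat p + γ * M - c p := by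
    rintro ⟨s, a⟩
    have hQcEq : Qc (s, a) = B Qc (s, a) - c (s, a) := by
      conv_lhs => rw [← hQc]
      exact hBc Qc (s, a)
    have hQhatEq : Qhat (s, a) = B Qhat (s, a) := by rw [hQhat]
    have hsup : ∀ s' : S,
        Finset.univ.sup' hneA (fun a' : A => Qc (s', a')) ≤
        Finset.univ.sup' hneA (fun a' : A => Qhat (s', a')) + M := by
      intro s'
      obtain ⟨a0, -, ha0⟩ := Finset.exists_mem_eq_sup' hneA (fun a' : A => Qc (s', a'))
      rw [ha0]
      have h1 : Qc (s', a0) ≤ Qhat (s', a0) + M := by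
        have := hMmem (s', a0); linarith
      have h2 : Qhat (s', a0) ≤ Finset.univ.sup' hneA (fun a' : A => Qhat (s', a')) :=
        Finset.le_sup' (fun a' : A => Qhat (s', a')) (Finset.mem_univ a0)
      linarith
    have hsum : ∑ s', P s a s' * Finset.univ.sup' hneA (fun a' : A => Qc (s', a')) ≤
        ∑ s', P s a s' * (Finset.univ.sup' hneA (fun a' : A => Qhat (s', a')) + M) := by
      apply Finset.sum_le_sum
      intro s' _
      exact mul_le_mul_of_nonneg_left (hsup s') (hP0 s a s')
    have hsum2 : ∑ s', P s a s' * (Finset.univ.sup' hneA (fun a' : A => Qhat (s', a')) + M)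
        = (∑ s', P s a s' * Finset.univ.sup' hneA (fun a' : A => Qhat (s', a'))) + M := by
      rw [show (∑ s', P s a s' * (Finset.univ.sup' hneA (fun a' : A => Qhat (s', a')) + M))
          = (∑ s', (P s a s' * Finset.univ.sup' hneA (fun a' : A => Qhat (s', a'))
              + P s a s' * M)) by
        apply Finset.sum_congr rfl; intro s' _; ring]
      rw [Finset.sum_add_distrib, ← Finset.sum_mul, hP1 s a, one_mul]
    have hBle : B Qc (s, a) ≤ B Qhat (s, a) + γ * M := by
      rw [hB Qc s a, hB Qhat s a]
      have := mul_le_mul_of_nonneg_left (hsum.trans_eq hsum2) hγ0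
      linarith [this]
    linarith [hQcEq, hQhatEq, hBle]
  -- M ≤ 0
  have hM0 : M ≤ 0 := by
    obtain ⟨p0, -, hp0⟩ := Finset.exists_mem_eq_sup' hne (fun p => Qc p - Qhat p)
    have h1 : M = Qc p0 - Qhat p0 := hp0
    have h2 := key p0
    have h3 := hc p0
    nlinarith
  have hγM : γ * M ≤ 0 := mul_nonpos_of_nonneg_of_nonpos hγ0 hM0
  have main : ∀ p : S × A, Qc p ≤ Qhat p - c p := fun p => by
    have := key p; linarith
  refine ⟨main, fun hcpos p => ?_⟩
  have := main p
  have := hcpos p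
  linarith
end
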